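/- arXiv:1705.05036 — 9 statements merged into one kernel-verified Lean document; each statement's English description precedes it below -/
import Mathlib

section
/- Let a > 1 and λ > 1 be real numbers and let g : ℝ → ℝ be an even function, differentiable on the open interval (−a, a), with g((−a,a)) ⊆ (−a,a), satisfying g(x) = −λ·g(g(−x/λ)) for all x ∈ (−a,a). If b ∈ (−a,a) satisfies g(b/λ) = b and g′(b) ≠ 0, then g′(b/λ) = −1. -/
/-! Differentiating `g x = -λ g (g (-x/λ))` by the chain rule gives
`g'(x) = g'(g(-x/λ)) · g'(-x/λ)`. At `x = b` evenness turns `g(-b/λ)` into `g(b/λ) = b` and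
`g'(-b/λ)` into `-g'(b/λ)`, so `g'(b) = -g'(b) g'(b/λ)`; cancelling `g'(b) ≠ 0` leaves
`g'(b/λ) = -1`. -/

open Filter Topology

theorem deriv_neg_of_even {g : ℝ → ℝ} (heven : ∀ x, g (-x) = g x) (x : ℝ) :
    deriv g (-x) = -deriv g x := by
  have h := deriv_comp_neg (f := g) (x := -x)
  rw [funext heven, neg_neg] at h
  linarith

theorem deriv_eq_mul_of_eventuallyEq_renormalize {g : ℝ → ℝ} {lam x : ℝ} (hlam : lam ≠ 0)
    (hfe : g =ᶠ[𝓝 x] fun y => -lam * g (g (-y / lam)))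
    (hinner : DifferentiableAt ℝ g (-x / lam))
    (houter : DifferentiableAt ℝ g (g (-x / lam))) :
    deriv g x = deriv g (g (-x / lam)) * deriv g (-x / lam) := by
  have hscale : HasDerivAt (fun y : ℝ => -y / lam) (-1 / lam) x := (hasDerivAt_neg x).div_const lam
  have hrhs := ((houter.hasDerivAt.comp x (hinner.hasDerivAt.comp x hscale)).const_mul (-lam))
  rw [(hrhs.congr_of_eventuallyEq hfe).deriv]
  field_simp

theorem div_mem_Ioo_neg_self {a lam b : ℝ} (hlam : 1 ≤ lam) (hb : b ∈ Set.Ioo (-a) a) :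
    b / lam ∈ Set.Ioo (-a) a := by
  have hb' : |b| < a := abs_lt.mpr hb
  refine abs_lt.mp (lt_of_le_of_lt ?_ hb')
  rw [abs_div, abs_of_pos (zero_lt_one.trans_le hlam)]
  exact div_le_self (abs_nonneg b) hlam

theorem feigenbaum_slope_at_b2_general
    (a lam : ℝ) (hlam : 1 < lam) (g : ℝ → ℝ)
    (heven : ∀ x : ℝ, g (-x) = g x)
    (hdiff : ∀ x ∈ Set.Ioo (-a) a, DifferentiableAt ℝ g x)
    (hfe : ∀ x ∈ Set.Ioo (-a) a, g x = -lam * g (g (-x / lam)))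
    (b : ℝ) (hb : b ∈ Set.Ioo (-a) a)
    (hgb : g (b / lam) = b) (hdb : deriv g b ≠ 0) :
    deriv g (b / lam) = -1 := by
  have hnb : -b ∈ Set.Ioo (-a) a := ⟨neg_lt_neg hb.2, by linarith [hb.1]⟩
  have hg_neg : g (-b / lam) = b := by rw [neg_div, heven, hgb]
  have hfe_near : g =ᶠ[𝓝 b] fun y => -lam * g (g (-y / lam)) :=
    eventually_of_mem (isOpen_Ioo.mem_nhds hb) hfe
  have hchain := deriv_eq_mul_of_eventuallyEq_renormalize (zero_lt_one.trans hlam).ne' hfe_near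
    (hdiff _ (div_mem_Ioo_neg_self hlam.le hnb)) (by rw [hg_neg]; exact hdiff b hb)
  rw [hg_neg, neg_div, deriv_neg_of_even heven] at hchain
  have : deriv g b * (deriv g (b / lam) + 1) = 0 := by linarith
  exact eq_neg_of_add_eq_zero_left ((mul_eq_zero.mp this).resolve_left hdb)

/-- the slope of the renormalization fixed point at `b/λ` is `-1`
whenever `g(b/λ) = b` and `g'(b) ≠ 0`. -/
theorem feigenbaum_slope_at_b2
    (a lam : ℝ) (ha : 1 < a) (hlam : 1 < lam) (g : ℝ → ℝ)
    (heven : ∀ x : ℝ, g (-x) = g x)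
    (hdiff : ∀ x ∈ Set.Ioo (-a) a, DifferentiableAt ℝ g x)
    (hmaps : ∀ x ∈ Set.Ioo (-a) a, g x ∈ Set.Ioo (-a) a)
    (hfe : ∀ x ∈ Set.Ioo (-a) a, g x = -lam * g (g (-x / lam)))
    (b : ℝ) (hb : b ∈ Set.Ioo (-a) a)
    (hgb : g (b / lam) = b) (hdb : deriv g b ≠ 0) :
    deriv g (b / lam) = -1 :=
  feigenbaum_slope_at_b2_general a lam hlam g heven hdiff hfe b hb hgb hdb
end

section
/- Let λ > 1 and let g : ℝ → ℝ be even and three times differentiable with continuous third derivative on an open interval containing [−1,1]. Assume: (a) g has negative Schwarzian derivative on [−1,1], i.e. for every x ∈ [−1,1] with g′(x) ≠ 0 one has g′′′(x)/g′(x) − (3/2)·(g′′(x)/g′(x))² < 0; (b) there are reals b and c with 0 < b < 1/λ < c ≤ 1 such that g′(b) = −1 and g′(c) = −λ; (c) g′(x) ≠ 0 for all x ∈ [b, 1]; and (d) g′(−1) = (g′(1/λ))². Then |g′(1/λ)| > 1 and |g′(x)| ≥ |g′(1/λ)| for every x ∈ [−1,1] with 1/λ ≤ |x| ≤ 1. 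-/
/-!
Let `w = 1 / |g'|` on `[b, 1]`. A negative Schwarzian derivative gives `g' g''' < (3/2) g''^2`,
hence `g' g''' < 2 g''^2`, which is exactly `w'' > 0`: `w` is strictly convex. So
`w (1/λ) < max (w b) (w c) = max 1 (1/λ) = 1`, i.e. `μ := |g'(1/λ)| > 1`. As `g'` is odd,
`|g'(1)| = |g'(-1)| = μ^2`, and convexity on `[1/λ, 1]` bounds `w` there by
`max (1/μ) (1/μ^2) = 1/μ`; evenness of `|g'|` covers `-1 ≤ x ≤ -1/λ`.
-/

open Set

noncomputable def schwarzian (f : ℝ → ℝ) (x : ℝ) : ℝ :=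
  deriv (deriv (deriv f)) x / deriv f x - 3 / 2 * (deriv (deriv f) x / deriv f x) ^ 2

theorem IsPreconnected.forall_pos_or_forall_neg {α : Type*} [TopologicalSpace α] {s : Set α}
    {f : α → ℝ} (hs : IsPreconnected s) (hf : ContinuousOn f s) (hne : ∀ x ∈ s, f x ≠ 0) :
    (∀ x ∈ s, 0 < f x) ∨ ∀ x ∈ s, f x < 0 := by
  by_contra! ⟨⟨x, hx, hfx⟩, y, hy, hfy⟩
  obtain ⟨z, hz, hfz⟩ := hs.intermediate_value hx hy hf ⟨hfx, hfy⟩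
  exact hne z hz hfz

theorem Function.Even.deriv_neg {f : ℝ → ℝ} (hf : Function.Even f) (x : ℝ) :
    deriv f (-x) = -deriv f x := by
  have h := deriv_comp_neg (f := f) (x := x)
  rw [show (fun y => f (-y)) = f from funext hf] at h
  linarith

theorem Function.Even.abs_deriv_abs {f : ℝ → ℝ} (hf : Function.Even f) (x : ℝ) :
    |deriv f (|x|)| = |deriv f x| := by
  rcases abs_choice x with h | h <;> rw [h]
  rw [hf.deriv_neg, abs_neg]

-- `(1/f)'' = (2 f'^2 - f f'') / f^3`
theorem strictConvexOn_inv_of_mul_lt_two_mul_sq {f f' f'' : ℝ → ℝ} {a b : ℝ}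
    (hf : ContinuousOn f (Icc a b)) (hpos : ∀ x ∈ Icc a b, 0 < f x)
    (hf' : ∀ x ∈ Ioo a b, HasDerivAt f (f' x) x) (hf'' : ∀ x ∈ Ioo a b, HasDerivAt f' (f'' x) x)
    (h : ∀ x ∈ Ioo a b, f x * f'' x < 2 * f' x ^ 2) :
    StrictConvexOn ℝ (Icc a b) fun x => (f x)⁻¹ := by
  refine strictConvexOn_of_deriv2_pos (convex_Icc a b) (hf.inv₀ fun x hx => (hpos x hx).ne') ?_
  rw [interior_Icc]
  intro x hx
  have hfx := hpos x (Ioo_subset_Icc_self hx)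
  have hderiv : deriv (fun y => (f y)⁻¹) =ᶠ[nhds x] fun y => -f' y / f y ^ 2 := by
    filter_upwards [isOpen_Ioo.mem_nhds hx] with y hy
    exact ((hf' y hy).inv (hpos y (Ioo_subset_Icc_self hy)).ne').deriv
  have hsq : HasDerivAt (fun y => f y ^ 2) (2 * f x * f' x) x := by
    simpa using (hf' x hx).fun_pow 2
  have h2 : HasDerivAt (fun y => -f' y / f y ^ 2)
      ((-f'' x * f x ^ 2 - -f' x * (2 * f x * f' x)) / (f x ^ 2) ^ 2) x :=
    (hf'' x hx).neg.div hsq (by positivity)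
  rw [Function.iterate_succ_apply', Function.iterate_one, hderiv.deriv_eq, h2.deriv]
  apply div_pos _ (by positivity)
  nlinarith [mul_lt_mul_of_pos_left (h x hx) hfx]

theorem strictConvexOn_inv_abs_of_mul_lt_two_mul_sq {f f' f'' : ℝ → ℝ} {a b : ℝ}
    (hf : ContinuousOn f (Icc a b)) (hne : ∀ x ∈ Icc a b, f x ≠ 0)
    (hf' : ∀ x ∈ Ioo a b, HasDerivAt f (f' x) x) (hf'' : ∀ x ∈ Ioo a b, HasDerivAt f' (f'' x) x)
    (h : ∀ x ∈ Ioo a b, f x * f'' x < 2 * f' x ^ 2) :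
    StrictConvexOn ℝ (Icc a b) fun x => |f x|⁻¹ := by
  rcases isPreconnected_Icc.forall_pos_or_forall_neg hf hne with hpos | hneg
  · refine (strictConvexOn_inv_of_mul_lt_two_mul_sq hf hpos hf' hf'' h).congr fun x hx => ?_
    rw [abs_of_pos (hpos x hx)]
  · refine (strictConvexOn_inv_of_mul_lt_two_mul_sq hf.neg (fun x hx => neg_pos.2 (hneg x hx))
      (fun x hx => (hf' x hx).neg) (fun x hx => (hf'' x hx).neg) fun x hx => ?_).congr
      fun x hx => ?_
    · simpa using h x hx
    · simp [abs_of_neg (hneg x hx)]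

theorem strictConvexOn_inv_abs_deriv_of_schwarzian_neg {g : ℝ → ℝ} {U : Set ℝ} {a b : ℝ}
    (hU : IsOpen U) (hg : ContDiffOn ℝ 3 g U) (hsub : Icc a b ⊆ U)
    (hne : ∀ x ∈ Icc a b, deriv g x ≠ 0) (hS : ∀ x ∈ Ioo a b, schwarzian g x < 0) :
    StrictConvexOn ℝ (Icc a b) fun x => |deriv g x|⁻¹ := by
  have hg1 : ContDiffOn ℝ 2 (deriv g) U := hg.deriv_of_isOpen hU (by norm_num)
  have hg2 : ContDiffOn ℝ 1 (deriv (deriv g)) U := hg1.deriv_of_isOpen hU (by norm_num)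
  have hmem : ∀ x ∈ Ioo a b, U ∈ nhds x := fun x hx => hU.mem_nhds (hsub (Ioo_subset_Icc_self hx))
  refine strictConvexOn_inv_abs_of_mul_lt_two_mul_sq (hg1.continuousOn.mono hsub) hne
    (fun x hx => ((hg1.differentiableOn (by norm_num)).differentiableAt (hmem x hx)).hasDerivAt)
    (fun x hx => ((hg2.differentiableOn (by norm_num)).differentiableAt (hmem x hx)).hasDerivAt)
    fun x hx => ?_
  have hg1x := hne x (Ioo_subset_Icc_self hx)
  have hcross : deriv g x * deriv (deriv (deriv g)) x < 3 / 2 * deriv (deriv g) x ^ 2 := by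
    have h := mul_neg_of_neg_of_pos (hS x hx) (pow_pos (sq_pos_of_ne_zero hg1x) 1)
    rw [schwarzian, pow_one] at h
    field_simp at h
    linarith
  nlinarith [sq_nonneg (deriv (deriv g) x)]

theorem feigenbaum_expanding_on_A_and_C_general
    (lam : ℝ) (g : ℝ → ℝ)
    (heven : ∀ x : ℝ, g (-x) = g x)
    (s t : ℝ) (hs : s < -1) (ht : 1 < t)
    (hsmooth : ContDiffOn ℝ 3 g (Set.Ioo s t))
    (hschwarz : ∀ x ∈ Set.Icc (-1 : ℝ) 1, deriv g x ≠ 0 →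
      deriv (deriv (deriv g)) x / deriv g x
        - (3 / 2) * (deriv (deriv g) x / deriv g x) ^ 2 < 0)
    (b c : ℝ) (hb0 : 0 < b) (hblam : b < 1 / lam) (hlamc : 1 / lam < c)
    (hc1 : c ≤ 1) (hdb : deriv g b = -1) (hdc : deriv g c = -lam)
    (hne : ∀ x ∈ Set.Icc b 1, deriv g x ≠ 0)
    (hrel : deriv g (-1) = (deriv g (1 / lam)) ^ 2) :
    1 < |deriv g (1 / lam)| ∧
      ∀ x ∈ Set.Icc (-1 : ℝ) 1, 1 / lam ≤ |x| → |x| ≤ 1 →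
        |deriv g (1 / lam)| ≤ |deriv g x| := by
  have hinv_pos : 0 < 1 / lam := hb0.trans hblam
  have hinv_lt_one : 1 / lam < 1 := hlamc.trans_le hc1
  have hinv_mem : 1 / lam ∈ Icc b 1 := ⟨hblam.le, hinv_lt_one.le⟩
  have hone_mem : (1 : ℝ) ∈ Icc b 1 := ⟨by linarith, le_rfl⟩
  have hconv : StrictConvexOn ℝ (Icc b 1) fun x => |deriv g x|⁻¹ :=
    strictConvexOn_inv_abs_deriv_of_schwarzian_neg isOpen_Ioo hsmooth
      (fun x hx => ⟨by linarith [hx.1], by linarith [hx.2]⟩) hne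
      fun x hx => hschwarz x ⟨by linarith [hx.1], hx.2.le⟩ (hne x (Ioo_subset_Icc_self hx))
  set μ := |deriv g (1 / lam)|
  have hμ_pos : 0 < μ := abs_pos.2 (hne _ hinv_mem)
  have hμ : 1 < μ := by
    have h := hconv.lt_on_openSegment (x := b) (y := c) ⟨le_rfl, by linarith⟩ ⟨by linarith, hc1⟩
      (by linarith) (by rw [openSegment_eq_Ioo (by linarith)]; exact ⟨hblam, hlamc⟩)
    have hlam_inv : lam⁻¹ ≤ 1 := by rw [← one_div]; exact hinv_lt_one.le
    rw [hdb, hdc, abs_neg, abs_neg, abs_one, inv_one, abs_of_pos (one_div_pos.1 hinv_pos),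
      max_eq_left hlam_inv] at h
    exact (inv_lt_one₀ hμ_pos).1 h
  have hμ_one : |deriv g 1| = μ ^ 2 := by
    have h := Function.Even.abs_deriv_abs heven (-1)
    rw [abs_neg, abs_one] at h
    rw [h, hrel, abs_pow]
  refine ⟨hμ, fun x _ hx1 hx2 => ?_⟩
  rw [← Function.Even.abs_deriv_abs heven]
  have h := hconv.convexOn.le_on_segment hinv_mem hone_mem
    (by rw [segment_eq_Icc hinv_lt_one.le]; exact ⟨hx1, hx2⟩)
  rw [hμ_one, max_eq_left (inv_anti₀ hμ_pos (by nlinarith))] at h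
  exact (inv_le_inv₀ (abs_pos.2 (hne _ ⟨by linarith, hx2⟩)) hμ_pos).1 h

/-- the renormalization fixed point `g` is expanding on
`{x ∈ [-1,1] : 1/λ ≤ |x| ≤ 1}`, with expansion constant `|g'(1/λ)| > 1`. -/
theorem feigenbaum_expanding_on_A_and_C
    (lam : ℝ) (hlam : 1 < lam) (g : ℝ → ℝ)
    (heven : ∀ x : ℝ, g (-x) = g x)
    (s t : ℝ) (hs : s < -1) (ht : 1 < t)
    (hsmooth : ContDiffOn ℝ 3 g (Set.Ioo s t))
    (hschwarz : ∀ x ∈ Set.Icc (-1 : ℝ) 1, deriv g x ≠ 0 →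
      deriv (deriv (deriv g)) x / deriv g x
        - (3 / 2) * (deriv (deriv g) x / deriv g x) ^ 2 < 0)
    (b c : ℝ) (hb0 : 0 < b) (hblam : b < 1 / lam) (hlamc : 1 / lam < c)
    (hc1 : c ≤ 1) (hdb : deriv g b = -1) (hdc : deriv g c = -lam)
    (hne : ∀ x ∈ Set.Icc b 1, deriv g x ≠ 0)
    (hrel : deriv g (-1) = (deriv g (1 / lam)) ^ 2) :
    1 < |deriv g (1 / lam)| ∧
      ∀ x ∈ Set.Icc (-1 : ℝ) 1, 1 / lam ≤ |x| → |x| ≤ 1 →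
        |deriv g (1 / lam)| ≤ |deriv g x| :=
  feigenbaum_expanding_on_A_and_C_general lam g heven s t hs ht hsmooth hschwarz b c hb0 hblam hlamc
    hc1 hdb hdc hne hrel
end

section
/- Let a > 1 and λ > 1 be real numbers and let g : ℝ → ℝ be differentiable on the open interval (−a, a), with g((−a,a)) ⊆ (−a,a), satisfying g(x) = −λ·g(g(−x/λ)) for all x ∈ (−a,a). Suppose E > 0 and E′ > 0 are constants such that |g′(y)| ≥ E for every y with 1/λ ≤ |y| ≤ 1 and |g′(y)| ≤ E′ for every y ∈ [−1,1]. Define T : ℝ → ℝ by T(y) = −λ·g(y). Then for every integer j ≥ 0 and every x with λ^{−(j+1)} ≤ |x| ≤ λ^{−j}, the map T^{j} ∘ g is differentiable at x and E·λ^{j} ≤ |(T^{j} ∘ g)′(x)| ≤ E′·λ^{j}. -/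
/-!
Iterating the functional equation conjugates `T y = -λ g y` to the rescaling `x ↦ -λ x`:
`T^[n] (g x) = g ((-λ)^n x)` as long as `λ^n |x|` stays inside the domain. Hence near `x` the map
`T^[j] ∘ g` is `g` composed with multiplication by `(-λ)^j`, and `(-λ)^j x` lands in the annulus
`1/λ ≤ |y| ≤ 1` where the bounds on `g'` hold; the chain rule contributes the factor `λ^j`.
-/

open Filter Topology

section Rescaling

variable {a lam : ℝ} {g : ℝ → ℝ}

theorem apply_neg_mul_eq_of_functional_eq (hlam : lam ≠ 0)
    (hfe : ∀ x ∈ Set.Ioo (-a) a, g x = -lam * g (g (-x / lam))) {y : ℝ} (hy : |lam * y| < a) :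
    g (-lam * y) = -lam * g (g y) := by
  have hmem : -lam * y ∈ Set.Ioo (-a) a := by
    rw [Set.mem_Ioo, ← abs_lt, abs_mul, abs_neg, ← abs_mul]
    exact hy
  rw [hfe _ hmem, neg_mul lam y, neg_neg, mul_div_cancel_left₀ y hlam]

theorem rescale_iterate_apply_eq (hlam : 1 ≤ lam)
    (hfe : ∀ x ∈ Set.Ioo (-a) a, g x = -lam * g (g (-x / lam))) :
    ∀ (n : ℕ) (y : ℝ), lam ^ n * |y| < a →
      (fun y : ℝ => -lam * g y)^[n] (g y) = g ((-lam) ^ n * y)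
  | 0, y, _ => by simp
  | n + 1, y, hy => by
    have hlam0 : 0 < lam := zero_lt_one.trans_le hlam
    have hy' : lam ^ n * |-lam * y| < a := by
      rwa [abs_mul, abs_neg, abs_of_pos hlam0, ← mul_assoc, ← pow_succ]
    have hstep : |lam * y| < a := by
      rw [abs_mul, abs_of_pos hlam0]
      calc lam * |y| ≤ lam ^ (n + 1) * |y| := by
            gcongr
            exact le_self_pow₀ hlam n.succ_ne_zero
        _ < a := hy
    rw [Function.iterate_succ_apply, ← apply_neg_mul_eq_of_functional_eq hlam0.ne' hfe hstep,
      rescale_iterate_apply_eq hlam hfe n _ hy', pow_succ, mul_assoc]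

theorem rescale_iterate_comp_eventuallyEq (hlam : 1 ≤ lam)
    (hfe : ∀ x ∈ Set.Ioo (-a) a, g x = -lam * g (g (-x / lam))) (n : ℕ) {x : ℝ}
    (hx : lam ^ n * |x| < a) :
    (fun y : ℝ => -lam * g y)^[n] ∘ g =ᶠ[𝓝 x] fun y => g ((-lam) ^ n * y) := by
  have hnear : ∀ᶠ y in 𝓝 x, lam ^ n * |y| < a :=
    (continuous_const.mul continuous_abs).continuousAt.eventually_lt continuousAt_const hx
  filter_upwards [hnear] with y hy
  exact rescale_iterate_apply_eq hlam hfe n y hy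

theorem hasDerivAt_rescale_iterate_comp (hlam : 1 ≤ lam)
    (hfe : ∀ x ∈ Set.Ioo (-a) a, g x = -lam * g (g (-x / lam))) (n : ℕ) {x : ℝ}
    (hx : lam ^ n * |x| < a) (hg : DifferentiableAt ℝ g ((-lam) ^ n * x)) :
    HasDerivAt ((fun y : ℝ => -lam * g y)^[n] ∘ g) (deriv g ((-lam) ^ n * x) * (-lam) ^ n) x := by
  have hlin : HasDerivAt (fun y : ℝ => (-lam) ^ n * y) ((-lam) ^ n) x := by
    simpa using (hasDerivAt_id x).const_mul ((-lam) ^ n)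
  exact (hg.hasDerivAt.comp x hlin).congr_of_eventuallyEq
    (rescale_iterate_comp_eventuallyEq hlam hfe n hx)

end Rescaling

theorem feigenbaum_rescaled_derivative_estimate_general
    (a lam : ℝ) (ha : 1 < a) (hlam : 1 < lam) (g : ℝ → ℝ)
    (hdiff : ∀ x ∈ Set.Ioo (-a) a, DifferentiableAt ℝ g x)
    (hfe : ∀ x ∈ Set.Ioo (-a) a, g x = -lam * g (g (-x / lam)))
    (E E' : ℝ)
    (hE : ∀ y : ℝ, 1 / lam ≤ |y| → |y| ≤ 1 → E ≤ |deriv g y|)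
    (hE' : ∀ y ∈ Set.Icc (-1 : ℝ) 1, |deriv g y| ≤ E')
    (j : ℕ) (x : ℝ) (hx1 : lam⁻¹ ^ (j + 1) ≤ |x|) (hx2 : |x| ≤ lam⁻¹ ^ j) :
    DifferentiableAt ℝ ((fun y : ℝ => -lam * g y)^[j] ∘ g) x ∧
      E * lam ^ j ≤ |deriv ((fun y : ℝ => -lam * g y)^[j] ∘ g) x| ∧
      |deriv ((fun y : ℝ => -lam * g y)^[j] ∘ g) x| ≤ E' * lam ^ j := by
  have hlam0 : 0 < lam := zero_lt_one.trans hlam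
  have habs : |(-lam) ^ j * x| = lam ^ j * |x| := by
    rw [abs_mul, abs_pow, abs_neg, abs_of_pos hlam0]
  have hupper : |(-lam) ^ j * x| ≤ 1 := by
    rw [habs, ← le_div_iff₀' (by positivity), one_div, ← inv_pow]
    exact hx2
  have hlower : 1 / lam ≤ |(-lam) ^ j * x| := by
    rw [habs, one_div, ← div_le_iff₀' (by positivity), div_eq_mul_inv, ← inv_pow, ← pow_succ']
    exact hx1
  have hdom : |(-lam) ^ j * x| < a := hupper.trans_lt ha
  have hderiv := hasDerivAt_rescale_iterate_comp hlam.le hfe j (habs ▸ hdom)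
    (hdiff _ (abs_lt.1 hdom))
  have hnorm : |deriv ((fun y : ℝ => -lam * g y)^[j] ∘ g) x| =
      |deriv g ((-lam) ^ j * x)| * lam ^ j := by
    rw [hderiv.deriv, abs_mul, abs_pow, abs_neg, abs_of_pos hlam0]
  refine ⟨hderiv.differentiableAt, ?_, ?_⟩ <;> rw [hnorm] <;> gcongr
  · exact hE _ hlower hupper
  · exact hE' _ (abs_le.1 hupper)

/-- derivative estimate for the rescaled return maps
`T^[j] ∘ g`, where `T y = -λ g y`: on `λ^{-(j+1)} ≤ |x| ≤ λ^{-j}` the map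
`T^[j] ∘ g` is differentiable and `E λ^j ≤ |(T^[j] ∘ g)'(x)| ≤ E' λ^j`. -/
theorem feigenbaum_rescaled_derivative_estimate
    (a lam : ℝ) (ha : 1 < a) (hlam : 1 < lam) (g : ℝ → ℝ)
    (hdiff : ∀ x ∈ Set.Ioo (-a) a, DifferentiableAt ℝ g x)
    (hmaps : ∀ x ∈ Set.Ioo (-a) a, g x ∈ Set.Ioo (-a) a)
    (hfe : ∀ x ∈ Set.Ioo (-a) a, g x = -lam * g (g (-x / lam)))
    (E E' : ℝ) (hE0 : 0 < E) (hE'0 : 0 < E')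
    (hE : ∀ y : ℝ, 1 / lam ≤ |y| → |y| ≤ 1 → E ≤ |deriv g y|)
    (hE' : ∀ y ∈ Set.Icc (-1 : ℝ) 1, |deriv g y| ≤ E')
    (j : ℕ) (x : ℝ) (hx1 : lam⁻¹ ^ (j + 1) ≤ |x|) (hx2 : |x| ≤ lam⁻¹ ^ j) :
    DifferentiableAt ℝ ((fun y : ℝ => -lam * g y)^[j] ∘ g) x ∧
      E * lam ^ j ≤ |deriv ((fun y : ℝ => -lam * g y)^[j] ∘ g) x| ∧
      |deriv ((fun y : ℝ => -lam * g y)^[j] ∘ g) x| ≤ E' * lam ^ j :=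
  feigenbaum_rescaled_derivative_estimate_general a lam ha hlam g hdiff hfe E E' hE hE' j x hx1 hx2
end

section
/- For each n ∈ ℕ let Y_n be a complete metric space with metric d, let X_n ⊆ Y_n be a closed subset, and let f_n : Y_n → Y_{n+1} be a map which is continuous on X_n, maps X_n onto Y_{n+1}, and is uniformly expanding on X_n: there is a constant L > 1 (independent of n) with d(f_n(a), f_n(b)) ≥ L·d(a,b) for all a, b ∈ X_n. Let ε > 0 and let (x_n)_{n∈ℕ} be an ε-orbit, i.e. x_n ∈ X_n and d(x_{n+1}, f_n(x_n)) < ε for all n. Then there exists a unique sequence (u_n)_{n∈ℕ} with u_n ∈ X_n and u_{n+1} = f_n(u_n) for all n, such that d(x_n, u_n) ≤ ε/(L−1) for all n. -/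
/-!
Choose right inverses `g n` of `f n` with values in `X n`; by expansion they contract distances
by the factor `1/L`. Pulling the ε-orbit back, `x ↦ (n ↦ g n (x (n+1)))`, moves it by at most
`ε/L`, so the iterated pullbacks converge geometrically, coordinatewise, to an orbit within
`(ε/L) / (1 - 1/L) = ε/(L-1)` of `x`. Two orbits at bounded distance coincide, since expansion
multiplies their distance by `L` at each step.
-/

open Filter Topology

section Shadowing

variable {Y : ℕ → Type*} [∀ n, MetricSpace (Y n)] {X : ∀ n, Set (Y n)}
  {f : ∀ n, Y n → Y (n + 1)} {L : ℝ}

def IsUniformlyExpanding (X : ∀ n, Set (Y n)) (f : ∀ n, Y n → Y (n + 1)) (L : ℝ) : Prop :=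
  ∀ n, ∀ a ∈ X n, ∀ b ∈ X n, L * dist a b ≤ dist (f n a) (f n b)

def pullback (g : ∀ n, Y (n + 1) → Y n) (p : ∀ n, Y n) : ∀ n, Y n :=
  fun n => g n (p (n + 1))

namespace IsUniformlyExpanding

theorem pow_mul_dist_le (hf : IsUniformlyExpanding X f L) (hL : 0 ≤ L) {u v : ∀ n, Y n}
    (huX : ∀ n, u n ∈ X n) (hvX : ∀ n, v n ∈ X n)
    (hu : ∀ n, f n (u n) = u (n + 1)) (hv : ∀ n, f n (v n) = v (n + 1)) (n k : ℕ) :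
    L ^ k * dist (u n) (v n) ≤ dist (u (n + k)) (v (n + k)) := by
  induction k with
  | zero => simp
  | succ k ih =>
    calc L ^ (k + 1) * dist (u n) (v n) = L * (L ^ k * dist (u n) (v n)) := by ring
      _ ≤ L * dist (u (n + k)) (v (n + k)) := mul_le_mul_of_nonneg_left ih hL
      _ ≤ dist (u (n + k + 1)) (v (n + k + 1)) := by
        simpa only [hu, hv] using hf (n + k) _ (huX _) _ (hvX _)

theorem eq_of_dist_le (hf : IsUniformlyExpanding X f L) (hL : 1 < L) {u v : ∀ n, Y n}
    (huX : ∀ n, u n ∈ X n) (hvX : ∀ n, v n ∈ X n)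
    (hu : ∀ n, f n (u n) = u (n + 1)) (hv : ∀ n, f n (v n) = v (n + 1))
    {C : ℝ} (hC : ∀ n, dist (u n) (v n) ≤ C) : u = v := by
  funext n
  have hLk : ∀ k, 0 < L ^ k := fun k => pow_pos (zero_lt_one.trans hL) k
  have hbound : ∀ k, dist (u n) (v n) ≤ C / L ^ k := fun k => by
    rw [le_div_iff₀' (hLk k)]
    exact (hf.pow_mul_dist_le (zero_le_one.trans hL.le) huX hvX hu hv n k).trans (hC _)
  have hlim : Tendsto (fun k => C / L ^ k) atTop (𝓝 0) :=
    tendsto_const_nhds.div_atTop (tendsto_pow_atTop_atTop_of_one_lt hL)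
  exact dist_le_zero.mp (ge_of_tendsto' hlim hbound)

variable {g : ∀ n, Y (n + 1) → Y n}

theorem dist_pullback_le (hf : IsUniformlyExpanding X f L) (hL : 0 < L)
    (hgX : ∀ n y, g n y ∈ X n) (hgf : ∀ n y, f n (g n y) = y)
    {p q : ∀ n, Y n} {c : ℝ} (hpq : ∀ n, dist (p n) (q n) ≤ c) (n : ℕ) :
    dist (pullback g p n) (pullback g q n) ≤ c / L := by
  rw [le_div_iff₀' hL]
  have := hf n _ (hgX n (p (n + 1))) _ (hgX n (q (n + 1)))
  rw [hgf, hgf] at this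
  exact this.trans (hpq (n + 1))

theorem dist_iterate_pullback_le (hf : IsUniformlyExpanding X f L) (hL : 0 < L)
    (hgX : ∀ n y, g n y ∈ X n) (hgf : ∀ n y, f n (g n y) = y)
    {p q : ∀ n, Y n} {c : ℝ} (hpq : ∀ n, dist (p n) (q n) ≤ c) (k n : ℕ) :
    dist ((pullback g)^[k] p n) ((pullback g)^[k] q n) ≤ c * (1 / L) ^ k := by
  induction k generalizing n with
  | zero => simpa using hpq n
  | succ k ih =>
    rw [Function.iterate_succ_apply', Function.iterate_succ_apply']
    calc _ ≤ c * (1 / L) ^ k / L := hf.dist_pullback_le hL hgX hgf ih n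
      _ = c * (1 / L) ^ (k + 1) := by ring

theorem exists_orbit_dist_le [∀ n, CompleteSpace (Y n)] (hf : IsUniformlyExpanding X f L)
    (hL : 1 < L) (hXcl : ∀ n, IsClosed (X n)) (hcont : ∀ n, ContinuousOn (f n) (X n))
    (hgX : ∀ n y, g n y ∈ X n) (hgf : ∀ n y, f n (g n y) = y)
    {x : ∀ n, Y n} (hx : ∀ n, x n ∈ X n) {ε : ℝ} (hεorb : ∀ n, dist (x (n + 1)) (f n (x n)) < ε) :
    ∃ u : ∀ n, Y n, (∀ n, u n ∈ X n) ∧ (∀ n, f n (u n) = u (n + 1)) ∧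
      ∀ n, dist (x n) (u n) ≤ ε / (L - 1) := by
  have hL0 : 0 < L := zero_lt_one.trans hL
  have hr : 1 / L < 1 := (div_lt_one hL0).mpr hL
  set Q : ℕ → ∀ n, Y n := fun k => (pullback g)^[k] x with hQ
  have hQX : ∀ k n, Q k n ∈ X n
    | 0, n => hx n
    | k + 1, n => by simp only [hQ, Function.iterate_succ_apply']; exact hgX _ _
  have hQf : ∀ k n, f n (Q (k + 1) n) = Q k (n + 1) := fun k n => by
    simp only [hQ, Function.iterate_succ_apply']; exact hgf _ _
  have hstep₀ : ∀ n, dist (x n) (pullback g x n) ≤ ε / L := fun n => by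
    rw [le_div_iff₀' hL0, dist_comm]
    have := hf n _ (hgX n (x (n + 1))) _ (hx n)
    rw [hgf] at this
    exact this.trans (hεorb n).le
  have hstep : ∀ n k, dist (Q k n) (Q (k + 1) n) ≤ ε / L * (1 / L) ^ k := fun n k => by
    simp only [hQ, Function.iterate_succ_apply]
    exact hf.dist_iterate_pullback_le hL0 hgX hgf hstep₀ k n
  choose u hu using fun n =>
    cauchySeq_tendsto_of_complete (cauchySeq_of_le_geometric _ _ hr (hstep n))
  have huX : ∀ n, u n ∈ X n := fun n =>
    (hXcl n).mem_of_tendsto (hu n) (Eventually.of_forall fun k => hQX k n)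
  refine ⟨u, huX, fun n => ?_, fun n => ?_⟩
  · have hQu : Tendsto (fun k => Q (k + 1) n) atTop (𝓝[X n] u n) :=
      tendsto_nhdsWithin_iff.mpr
        ⟨(hu n).comp (tendsto_add_atTop_nat 1), Eventually.of_forall fun k => hQX _ n⟩
    have hfQu := ((hcont n (u n) (huX n)).tendsto).comp hQu
    simp only [Function.comp_def, hQf] at hfQu
    exact tendsto_nhds_unique hfQu (hu (n + 1))
  · calc dist (x n) (u n) ≤ ε / L / (1 - 1 / L) :=
          dist_le_of_le_geometric_of_tendsto₀ _ _ hr (hstep n) (hu n)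
      _ = ε / (L - 1) := by field_simp

end IsUniformlyExpanding

end Shadowing

theorem nonautonomous_shadowing_general
    (Y : ℕ → Type*) [∀ n, MetricSpace (Y n)] [∀ n, CompleteSpace (Y n)]
    (X : ∀ n, Set (Y n)) (hXcl : ∀ n, IsClosed (X n))
    (f : ∀ n, Y n → Y (n + 1))
    (hcont : ∀ n, ContinuousOn (f n) (X n))
    (hsurj : ∀ n, Set.SurjOn (f n) (X n) (Set.univ : Set (Y (n + 1))))
    (L : ℝ) (hL : 1 < L)
    (hexp : ∀ n, ∀ a ∈ X n, ∀ b ∈ X n, L * dist a b ≤ dist (f n a) (f n b))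
    (ε : ℝ)
    (x : ∀ n, Y n) (hx : ∀ n, x n ∈ X n)
    (hεorb : ∀ n, dist (x (n + 1)) (f n (x n)) < ε) :
    ∃! u : ∀ n, Y n, (∀ n, u n ∈ X n) ∧ (∀ n, f n (u n) = u (n + 1)) ∧
      ∀ n, dist (x n) (u n) ≤ ε / (L - 1) := by
  have hf : IsUniformlyExpanding X f L := hexp
  choose g hgX hgf using fun n (y : Y (n + 1)) => hsurj n (Set.mem_univ y)
  obtain ⟨u, huX, hu, hxu⟩ := hf.exists_orbit_dist_le hL hXcl hcont hgX hgf hx hεorb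
  refine ⟨u, ⟨huX, hu, hxu⟩, fun v ⟨hvX, hv, hxv⟩ => ?_⟩
  refine hf.eq_of_dist_le hL hvX huX hv hu (C := ε / (L - 1) + ε / (L - 1)) fun n => ?_
  calc dist (v n) (u n) ≤ dist (x n) (v n) + dist (x n) (u n) := dist_triangle_left _ _ _
    _ ≤ _ := add_le_add (hxv n) (hxu n)

/-- shadowing theorem for non-autonomous systems: a uniformly
expanding non-autonomous system of maps between complete metric spaces has a
unique orbit `ε/(L-1)`-shadowing any given `ε`-orbit. -/
theorem nonautonomous_shadowing
    (Y : ℕ → Type*) [∀ n, MetricSpace (Y n)] [∀ n, CompleteSpace (Y n)]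
    (X : ∀ n, Set (Y n)) (hXcl : ∀ n, IsClosed (X n))
    (f : ∀ n, Y n → Y (n + 1))
    (hcont : ∀ n, ContinuousOn (f n) (X n))
    (hsurj : ∀ n, Set.SurjOn (f n) (X n) (Set.univ : Set (Y (n + 1))))
    (L : ℝ) (hL : 1 < L)
    (hexp : ∀ n, ∀ a ∈ X n, ∀ b ∈ X n, L * dist a b ≤ dist (f n a) (f n b))
    (ε : ℝ) (hε : 0 < ε)
    (x : ∀ n, Y n) (hx : ∀ n, x n ∈ X n)
    (hεorb : ∀ n, dist (x (n + 1)) (f n (x n)) < ε) :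
    ∃! u : ∀ n, Y n, (∀ n, u n ∈ X n) ∧ (∀ n, f n (u n) = u (n + 1)) ∧
      ∀ n, dist (x n) (u n) ≤ ε / (L - 1) :=
  nonautonomous_shadowing_general Y X hXcl f hcont hsurj L hL hexp ε x hx hεorb
end

section
/- Let E, m, M, L > 0 be reals, let R = [x₀, x₀+L] × [y₁, y₁+L] ⊆ ℝ × ℝ be a square, and let h : ℝ × ℝ → ℝ be differentiable on an open set containing R with |∂h/∂x(p)| ≤ E and −M ≤ ∂h/∂y(p) ≤ −m for every p ∈ R. Define F : ℝ × ℝ → ℝ × ℝ by F(x,y) = (h(x,y), x). Then for every real b with 0 < b < 1/(1+2E) and b·M ≤ 1, there exists a square I′ ⊆ F(R) whose side length is at least b·m·L. -/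
/-!
Each vertical segment `{x} × [y₁, y₁ + L]` of the square is mapped by `F` onto a horizontal
segment at height `x`, and since `∂h/∂y ≤ -m` that segment has length at least `m L`
(intermediate value theorem). Since `|∂h/∂x| ≤ E`, the endpoints of these segments move by at
most `E s` while `x` ranges over `[x₀, x₀ + s]`, so the image contains a rectangle of width `s`
and height `m L - 2 E s`. For `s = b m L` the condition `b (1 + 2 E) < 1` makes this height at
least `s`, and `b m ≤ b M ≤ 1` gives `s ≤ L`, so the columns stay inside the square.
-/

open Set

/-- `S` is a (closed, axis-parallel) square with side length `t`. -/
def IsSquareSide (t : ℝ) (S : Set (ℝ × ℝ)) : Prop :=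
  0 ≤ t ∧ ∃ a b : ℝ, S = Set.Icc a (a + t) ×ˢ Set.Icc b (b + t)

def henonMap (h : ℝ × ℝ → ℝ) (p : ℝ × ℝ) : ℝ × ℝ := (h p, p.1)

section PartialDerivatives

variable {𝕜 F : Type*} [NontriviallyNormedField 𝕜] [NormedAddCommGroup F] [NormedSpace 𝕜 F]
  {f : 𝕜 × 𝕜 → F} {f' : 𝕜 × 𝕜 →L[𝕜] F} {x y : 𝕜}

theorem HasFDerivAt.hasDerivAt_comp_prodMk_left (hf : HasFDerivAt f f' (x, y)) :
    HasDerivAt (fun x => f (x, y)) (f' (1, 0)) x :=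
  hf.comp_hasDerivAt x ((hasDerivAt_id x).prodMk (hasDerivAt_const x y))

theorem HasFDerivAt.hasDerivAt_comp_prodMk_right (hf : HasFDerivAt f f' (x, y)) :
    HasDerivAt (fun y => f (x, y)) (f' (0, 1)) y :=
  hf.comp_hasDerivAt y ((hasDerivAt_const y x).prodMk (hasDerivAt_id y))

end PartialDerivatives

theorem mul_sub_le_sub_of_hasDerivAt_le_neg {g g' : ℝ → ℝ} {a c m : ℝ} (hac : a ≤ c)
    (hg : ∀ y ∈ Icc a c, HasDerivAt g (g' y) y) (hg' : ∀ y ∈ Icc a c, g' y ≤ -m) :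
    m * (c - a) ≤ g a - g c := by
  have hderiv : ∀ y ∈ interior (Icc a c), deriv g y ≤ -m := fun y hy => by
    have hy' := interior_subset hy
    rw [(hg y hy').deriv]
    exact hg' y hy'
  have := (convex_Icc a c).image_sub_le_mul_sub_of_deriv_le
    (fun y hy => (hg y hy).continuousAt.continuousWithinAt)
    (fun y hy => (hg y (interior_subset hy)).differentiableAt.differentiableWithinAt)
    hderiv a (left_mem_Icc.2 hac) c (right_mem_Icc.2 hac) hac
  linarith

section Rectangle

variable {h : ℝ × ℝ → ℝ} {I K : Set ℝ}

theorem abs_sub_le_of_abs_fderiv_apply_le {E : ℝ} (hI : Convex ℝ I)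
    (hd : ∀ p ∈ I ×ˢ K, DifferentiableAt ℝ h p)
    (hdx : ∀ p ∈ I ×ˢ K, |fderiv ℝ h p (1, 0)| ≤ E)
    {x x' y : ℝ} (hx : x ∈ I) (hx' : x' ∈ I) (hy : y ∈ K) :
    |h (x', y) - h (x, y)| ≤ E * |x' - x| :=
  hI.norm_image_sub_le_of_norm_hasDerivWithin_le
    (fun t ht => (hd (t, y) ⟨ht, hy⟩).hasFDerivAt.hasDerivAt_comp_prodMk_left.hasDerivWithinAt)
    (fun t ht => hdx (t, y) ⟨ht, hy⟩) hx hx'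

theorem mul_sub_le_sub_of_fderiv_apply_le_neg {a c m x : ℝ} (hac : a ≤ c)
    (hd : ∀ p ∈ I ×ˢ Icc a c, DifferentiableAt ℝ h p)
    (hdy : ∀ p ∈ I ×ˢ Icc a c, fderiv ℝ h p (0, 1) ≤ -m) (hx : x ∈ I) :
    m * (c - a) ≤ h (x, a) - h (x, c) :=
  mul_sub_le_sub_of_hasDerivAt_le_neg hac
    (fun y hy => (hd (x, y) ⟨hx, hy⟩).hasFDerivAt.hasDerivAt_comp_prodMk_right)
    (fun y hy => hdy (x, y) ⟨hx, hy⟩)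

theorem continuousOn_comp_prodMk_of_differentiableAt {x : ℝ} (hx : x ∈ I)
    (hd : ∀ p ∈ I ×ˢ K, DifferentiableAt ℝ h p) : ContinuousOn (fun y => h (x, y)) K :=
  fun y hy => (hd (x, y) ⟨hx, hy⟩).hasFDerivAt.hasDerivAt_comp_prodMk_right.continuousAt
    |>.continuousWithinAt

end Rectangle

theorem Icc_prod_subset_henonMap_image {h : ℝ × ℝ → ℝ} {J : Set ℝ} {x₀ a c δ : ℝ}
    (hac : a ≤ c) (hcont : ∀ x ∈ J, ContinuousOn (fun y => h (x, y)) (Icc a c))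
    (hvar : ∀ x ∈ J, ∀ y ∈ Icc a c, |h (x, y) - h (x₀, y)| ≤ δ) :
    Icc (h (x₀, c) + δ) (h (x₀, a) - δ) ×ˢ J ⊆ henonMap h '' (J ×ˢ Icc a c) := by
  rintro ⟨z, x⟩ ⟨⟨hz₁, hz₂⟩, hx⟩
  have hvar_a := abs_le.1 (hvar x hx a (left_mem_Icc.2 hac))
  have hvar_c := abs_le.1 (hvar x hx c (right_mem_Icc.2 hac))
  have hz : z ∈ Icc (h (x, c)) (h (x, a)) := ⟨by linarith, by linarith⟩
  obtain ⟨y, hy, hyz⟩ := intermediate_value_Icc' hac (hcont x hx) hz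
  exact ⟨(x, y), ⟨hx, hy⟩, by simp only [henonMap, hyz]⟩

theorem Icc_prod_subset_henonMap_image_of_abs_fderiv_le {h : ℝ × ℝ → ℝ}
    {x₀ w a c E : ℝ} (hw : 0 ≤ w) (hac : a ≤ c)
    (hd : ∀ p ∈ Icc x₀ (x₀ + w) ×ˢ Icc a c, DifferentiableAt ℝ h p)
    (hdx : ∀ p ∈ Icc x₀ (x₀ + w) ×ˢ Icc a c, |fderiv ℝ h p (1, 0)| ≤ E) :
    Icc (h (x₀, c) + E * w) (h (x₀, a) - E * w) ×ˢ Icc x₀ (x₀ + w) ⊆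
      henonMap h '' (Icc x₀ (x₀ + w) ×ˢ Icc a c) := by
  have hx₀ : x₀ ∈ Icc x₀ (x₀ + w) := left_mem_Icc.2 (by linarith)
  have hE : 0 ≤ E := (abs_nonneg _).trans (hdx (x₀, a) ⟨hx₀, left_mem_Icc.2 hac⟩)
  refine Icc_prod_subset_henonMap_image hac
    (fun x hx => continuousOn_comp_prodMk_of_differentiableAt hx hd) fun x hx y hy => ?_
  have hxw : |x - x₀| ≤ w := abs_le.2 ⟨by linarith [hx.1], by linarith [hx.2]⟩
  exact (abs_sub_le_of_abs_fderiv_apply_le (convex_Icc _ _) hd hdx hx₀ hx hy).trans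
    (mul_le_mul_of_nonneg_left hxw hE)

theorem henon_image_contains_square_general
    (E m M L x₀ y₁ : ℝ) (hm : 0 < m) (hL : 0 < L)
    (h : ℝ × ℝ → ℝ)
    (R : Set (ℝ × ℝ)) (hR : R = Set.Icc x₀ (x₀ + L) ×ˢ Set.Icc y₁ (y₁ + L))
    (U : Set (ℝ × ℝ)) (hRU : R ⊆ U)
    (hdiff : ∀ p ∈ U, DifferentiableAt ℝ h p)
    (hdx : ∀ p ∈ R, |fderiv ℝ h p (1, 0)| ≤ E)
    (hdy : ∀ p ∈ R, fderiv ℝ h p (0, 1) ∈ Set.Icc (-M) (-m))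
    (F : ℝ × ℝ → ℝ × ℝ) (hF : F = fun p => (h p, p.1))
    (b : ℝ) (hb0 : 0 < b) (hb1 : b < 1 / (1 + 2 * E)) (hbM : b * M ≤ 1) :
    ∃ t : ℝ, b * m * L ≤ t ∧
      ∃ I' : Set (ℝ × ℝ), IsSquareSide t I' ∧ I' ⊆ F '' R := by
  subst hR hF
  have hd : ∀ p ∈ Icc x₀ (x₀ + L) ×ˢ Icc y₁ (y₁ + L), DifferentiableAt ℝ h p :=
    fun p hp => hdiff p (hRU hp)
  have hx₀ : x₀ ∈ Icc x₀ (x₀ + L) := left_mem_Icc.2 (by linarith)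
  have hcorner : (x₀, y₁) ∈ Icc x₀ (x₀ + L) ×ˢ Icc y₁ (y₁ + L) :=
    ⟨hx₀, left_mem_Icc.2 (by linarith)⟩
  have hE : 0 ≤ E := (abs_nonneg _).trans (hdx _ hcorner)
  have hmM : m ≤ M := by linarith [(hdy _ hcorner).1, (hdy _ hcorner).2]
  set s := b * m * L
  have hs0 : 0 ≤ s := by positivity
  have hsL : s ≤ L :=
    mul_le_of_le_one_left hL.le ((mul_le_mul_of_nonneg_left hmM hb0.le).trans hbM)
  have hsE : s * (1 + 2 * E) ≤ m * L := by
    rw [lt_div_iff₀ (by positivity)] at hb1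
    nlinarith [mul_pos hm hL]
  have hdrop := mul_sub_le_sub_of_fderiv_apply_le_neg (by linarith) hd
    (fun p hp => (hdy p hp).2) hx₀
  have hcols : Icc x₀ (x₀ + s) ×ˢ Icc y₁ (y₁ + L) ⊆ Icc x₀ (x₀ + L) ×ˢ Icc y₁ (y₁ + L) :=
    prod_mono (Icc_subset_Icc_right (by linarith)) le_rfl
  refine ⟨s, le_rfl, Icc (h (x₀, y₁ + L) + E * s) (h (x₀, y₁ + L) + E * s + s) ×ˢ
    Icc x₀ (x₀ + s), ⟨hs0, _, _, rfl⟩, ?_⟩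
  calc _ ⊆ Icc (h (x₀, y₁ + L) + E * s) (h (x₀, y₁) - E * s) ×ˢ Icc x₀ (x₀ + s) :=
        prod_mono (Icc_subset_Icc_right (by linarith)) le_rfl
    _ ⊆ henonMap h '' (Icc x₀ (x₀ + s) ×ˢ Icc y₁ (y₁ + L)) :=
        Icc_prod_subset_henonMap_image_of_abs_fderiv_le hs0 (by linarith)
          (fun p hp => hd p (hcols hp)) (fun p hp => hdx p (hcols hp))
    _ ⊆ _ := image_mono hcols

/-- the image of a square of side `L` under a Hénon-like map
`F(x,y) = (h(x,y), x)`, with `|∂h/∂x| ≤ E` and `-M ≤ ∂h/∂y ≤ -m < 0` on the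
square, contains a square of side at least `b·m·L` for every
`0 < b < 1/(1+2E)` with `b·M ≤ 1`. -/
theorem henon_image_contains_square
    (E m M L x₀ y₁ : ℝ) (hE : 0 < E) (hm : 0 < m) (hM : 0 < M) (hL : 0 < L)
    (h : ℝ × ℝ → ℝ)
    (R : Set (ℝ × ℝ)) (hR : R = Set.Icc x₀ (x₀ + L) ×ˢ Set.Icc y₁ (y₁ + L))
    (U : Set (ℝ × ℝ)) (hU : IsOpen U) (hRU : R ⊆ U)
    (hdiff : ∀ p ∈ U, DifferentiableAt ℝ h p)
    (hdx : ∀ p ∈ R, |fderiv ℝ h p (1, 0)| ≤ E)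
    (hdy : ∀ p ∈ R, fderiv ℝ h p (0, 1) ∈ Set.Icc (-M) (-m))
    (F : ℝ × ℝ → ℝ × ℝ) (hF : F = fun p => (h p, p.1))
    (b : ℝ) (hb0 : 0 < b) (hb1 : b < 1 / (1 + 2 * E)) (hbM : b * M ≤ 1) :
    ∃ t : ℝ, b * m * L ≤ t ∧
      ∃ I' : Set (ℝ × ℝ), IsSquareSide t I' ∧ I' ⊆ F '' R :=
  henon_image_contains_square_general E m M L x₀ y₁ hm hL h R hR U hRU hdiff hdx hdy F hF b hb0 hb1
    hbM
end

section
/- Let E > 1 and η ≥ 0 be reals with E > 1 + 2η, let W > 0, let I = [x₁, x₁+W] × [y₁, y₁+W] ⊆ ℝ × ℝ be a square, and let h : ℝ × ℝ → ℝ be differentiable on an open set containing I with ∂h/∂x(p) ≤ −E and |∂h/∂y(p)| ≤ η for every p ∈ I. Let s : ℝ → ℝ be the affine map s(t) = α + β·t with β ≠ 0, and define φ : ℝ × ℝ → ℝ × ℝ by φ(x,y) = (s(h(x,y)), s(y)). Then there exists a square I′ ⊆ φ(I) with side length exactly |β|·W. -/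
open Set

theorem exists_image_affine_Icc_eq (α β c W : ℝ) (hW : 0 ≤ W) :
    ∃ a, (fun t => α + β * t) '' Icc c (c + W) = Icc a (a + |β| * W) := by
  set u := α + β * c
  set v := α + β * (c + W)
  have himage : (fun t => α + β * t) '' Icc c (c + W) = uIcc u v := by
    rw [← uIcc_of_le (le_add_of_nonneg_right hW), ← image_const_add_uIcc, ← image_const_mul_uIcc,
      image_image]
  have hlength : max u v - min u v = |β| * W := by
    rw [max_sub_min_eq_abs, show v - u = β * W by ring, abs_mul, abs_of_nonneg hW]
  exact ⟨min u v, by rw [himage, uIcc, ← hlength, add_sub_cancel]⟩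

section Slices

variable {F : Type*} [NormedAddCommGroup F] [NormedSpace ℝ F] {h : ℝ × ℝ → F} {x y : ℝ}

theorem DifferentiableAt.hasDerivAt_slice_fst (hh : DifferentiableAt ℝ h (x, y)) :
    HasDerivAt (fun x' => h (x', y)) (fderiv ℝ h (x, y) (1, 0)) x :=
  hh.hasFDerivAt.comp_hasDerivAt x ((hasDerivAt_id x).prodMk (hasDerivAt_const x y))

theorem DifferentiableAt.hasDerivAt_slice_snd (hh : DifferentiableAt ℝ h (x, y)) :
    HasDerivAt (fun y' => h (x, y')) (fderiv ℝ h (x, y) (0, 1)) y :=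
  hh.hasFDerivAt.comp_hasDerivAt y ((hasDerivAt_const y x).prodMk (hasDerivAt_id y))

end Slices

section Rectangle

variable {h : ℝ × ℝ → ℝ} {x₁ x₂ y₁ y₂ : ℝ}

theorem sub_le_mul_of_fderiv_fst_le {C y : ℝ} (hx : x₁ ≤ x₂)
    (hdiff : ∀ x ∈ Icc x₁ x₂, DifferentiableAt ℝ h (x, y))
    (hdx : ∀ x ∈ Icc x₁ x₂, fderiv ℝ h (x, y) (1, 0) ≤ C) :
    h (x₂, y) - h (x₁, y) ≤ C * (x₂ - x₁) := by
  have hderiv : ∀ x ∈ Icc x₁ x₂, HasDerivAt (fun x' => h (x', y)) (fderiv ℝ h (x, y) (1, 0)) x :=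
    fun x hx => (hdiff x hx).hasDerivAt_slice_fst
  refine (convex_Icc x₁ x₂).image_sub_le_mul_sub_of_deriv_le
    (fun x hx => (hderiv x hx).continuousAt.continuousWithinAt)
    (fun x hx => (hderiv x (interior_subset hx)).differentiableAt.differentiableWithinAt)
    (fun x hx => ?_) x₁ (left_mem_Icc.2 hx) x₂ (right_mem_Icc.2 hx) hx
  rw [(hderiv x (interior_subset hx)).deriv]
  exact hdx x (interior_subset hx)

theorem abs_sub_le_mul_of_abs_fderiv_snd_le {C x : ℝ}
    (hdiff : ∀ y ∈ Icc y₁ y₂, DifferentiableAt ℝ h (x, y))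
    (hdy : ∀ y ∈ Icc y₁ y₂, |fderiv ℝ h (x, y) (0, 1)| ≤ C) :
    ∀ y ∈ Icc y₁ y₂, |h (x, y) - h (x, y₁)| ≤ C * (y - y₁) :=
  norm_image_sub_le_of_norm_deriv_le_segment'
    (fun y hy => (hdiff y hy).hasDerivAt_slice_snd.hasDerivWithinAt)
    (fun y hy => hdy y (Ico_subset_Icc_self hy))

end Rectangle

theorem exists_Icc_prod_subset_image_of_fderiv_le {h : ℝ × ℝ → ℝ} {x₁ y₁ W E η : ℝ}
    (hW : 0 ≤ W) (hEη : 1 + 2 * η ≤ E)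
    (hdiff : ∀ p ∈ Icc x₁ (x₁ + W) ×ˢ Icc y₁ (y₁ + W), DifferentiableAt ℝ h p)
    (hdx : ∀ p ∈ Icc x₁ (x₁ + W) ×ˢ Icc y₁ (y₁ + W), fderiv ℝ h p (1, 0) ≤ -E)
    (hdy : ∀ p ∈ Icc x₁ (x₁ + W) ×ˢ Icc y₁ (y₁ + W), |fderiv ℝ h p (0, 1)| ≤ η) :
    ∃ m, Icc m (m + W) ×ˢ Icc y₁ (y₁ + W) ⊆
      (fun p => (h p, p.2)) '' Icc x₁ (x₁ + W) ×ˢ Icc y₁ (y₁ + W) := by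
  have hx₁ : x₁ ∈ Icc x₁ (x₁ + W) := left_mem_Icc.2 (le_add_of_nonneg_right hW)
  have hx₂ : x₁ + W ∈ Icc x₁ (x₁ + W) := right_mem_Icc.2 (le_add_of_nonneg_right hW)
  have hy₁ : y₁ ∈ Icc y₁ (y₁ + W) := left_mem_Icc.2 (le_add_of_nonneg_right hW)
  have hη : 0 ≤ η := (abs_nonneg _).trans (hdy (x₁, y₁) ⟨hx₁, hy₁⟩)
  have hdrop : h (x₁ + W, y₁) - h (x₁, y₁) ≤ -E * (x₁ + W - x₁) :=
    sub_le_mul_of_fderiv_fst_le (le_add_of_nonneg_right hW) (fun x hx => hdiff _ ⟨hx, hy₁⟩)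
      (fun x hx => hdx _ ⟨hx, hy₁⟩)
  have hvert : ∀ x ∈ Icc x₁ (x₁ + W), ∀ y ∈ Icc y₁ (y₁ + W), |h (x, y) - h (x, y₁)| ≤ η * W :=
    fun x hx y hy => (abs_sub_le_mul_of_abs_fderiv_snd_le (fun y' hy' => hdiff _ ⟨hx, hy'⟩)
      (fun y' hy' => hdy _ ⟨hx, hy'⟩) y hy).trans
      (mul_le_mul_of_nonneg_left (by linarith [hy.2]) hη)
  refine ⟨h (x₁ + W, y₁) + η * W, ?_⟩
  rintro ⟨z, y⟩ ⟨hz, hy⟩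
  dsimp only at hz hy
  have hright := abs_le.1 (hvert _ hx₂ y hy)
  have hleft := abs_le.1 (hvert _ hx₁ y hy)
  have hmargin : 0 ≤ (E - (1 + 2 * η)) * W := mul_nonneg (sub_nonneg.2 hEη) hW
  have hcont : ContinuousOn (fun x => h (x, y)) (Icc x₁ (x₁ + W)) := fun x hx =>
    (hdiff (x, y) ⟨hx, hy⟩).hasDerivAt_slice_fst.continuousAt.continuousWithinAt
  obtain ⟨x, hx, hxz⟩ := intermediate_value_Icc' (le_add_of_nonneg_right hW) hcont
    (show z ∈ Icc (h (x₁ + W, y)) (h (x₁, y)) from ⟨by linarith [hz.1], by linarith [hz.2]⟩)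
  exact ⟨(x, y), ⟨hx, hy⟩, by rw [← hxz]⟩

theorem rescaling_image_contains_square_general
    (E η W x₁ y₁ α β : ℝ) (hEη : 1 + 2 * η < E)
    (hW : 0 < W)
    (h : ℝ × ℝ → ℝ)
    (I : Set (ℝ × ℝ)) (hI : I = Set.Icc x₁ (x₁ + W) ×ˢ Set.Icc y₁ (y₁ + W))
    (U : Set (ℝ × ℝ)) (hIU : I ⊆ U)
    (hdiff : ∀ p ∈ U, DifferentiableAt ℝ h p)
    (hdx : ∀ p ∈ I, fderiv ℝ h p (1, 0) ≤ -E)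
    (hdy : ∀ p ∈ I, |fderiv ℝ h p (0, 1)| ≤ η)
    (s : ℝ → ℝ) (hs : s = fun t => α + β * t)
    (φ : ℝ × ℝ → ℝ × ℝ) (hφ : φ = fun p => (s (h p), s p.2)) :
    ∃ I' : Set (ℝ × ℝ), IsSquareSide (|β| * W) I' ∧ I' ⊆ φ '' I := by
  subst hI hs hφ
  obtain ⟨m, hm⟩ := exists_Icc_prod_subset_image_of_fderiv_le hW.le hEη.le
    (fun p hp => hdiff p (hIU hp)) hdx hdy
  obtain ⟨a, ha⟩ := exists_image_affine_Icc_eq α β m W hW.le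
  obtain ⟨b, hb⟩ := exists_image_affine_Icc_eq α β y₁ W hW.le
  refine ⟨Icc a (a + |β| * W) ×ˢ Icc b (b + |β| * W), ⟨by positivity, a, b, rfl⟩, ?_⟩
  rw [← ha, ← hb, prod_image_image_eq]
  exact (image_mono hm).trans_eq (image_image _ _ _)

/-- the renormalization rescaling `φ(x,y) = (s(h(x,y)), s(y))`
of a square of side `W`, where `s(t) = α + β·t` is affine with `β ≠ 0`,
`∂h/∂x ≤ -E < -(1+2η)` and `|∂h/∂y| ≤ η` on the square, contains a square of
side exactly `|β|·W`. -/
theorem rescaling_image_contains_square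
    (E η W x₁ y₁ α β : ℝ) (hE : 1 < E) (hη : 0 ≤ η) (hEη : 1 + 2 * η < E)
    (hW : 0 < W) (hβ : β ≠ 0)
    (h : ℝ × ℝ → ℝ)
    (I : Set (ℝ × ℝ)) (hI : I = Set.Icc x₁ (x₁ + W) ×ˢ Set.Icc y₁ (y₁ + W))
    (U : Set (ℝ × ℝ)) (hU : IsOpen U) (hIU : I ⊆ U)
    (hdiff : ∀ p ∈ U, DifferentiableAt ℝ h p)
    (hdx : ∀ p ∈ I, fderiv ℝ h p (1, 0) ≤ -E)
    (hdy : ∀ p ∈ I, |fderiv ℝ h p (0, 1)| ≤ η)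
    (s : ℝ → ℝ) (hs : s = fun t => α + β * t)
    (φ : ℝ × ℝ → ℝ × ℝ) (hφ : φ = fun p => (s (h p), s p.2)) :
    ∃ I' : Set (ℝ × ℝ), IsSquareSide (|β| * W) I' ∧ I' ⊆ φ '' I :=
  rescaling_image_contains_square_general E η W x₁ y₁ α β hEη hW h I hI U hIU hdiff hdx hdy s hs φ
    hφ
end

section
/- Let U = I₁ × I₂ ⊆ ℝ × ℝ be a product of two intervals and let h : ℝ × ℝ → ℝ be differentiable on an open set containing U, with constants E ≥ 0 and η ≥ 0 such that |∂h/∂x(p)| ≥ E and |∂h/∂y(p)| ≤ η for every p ∈ U. Define F : ℝ × ℝ → ℝ × ℝ by F(x,y) = (h(x,y), x). Then for every nonempty compact set J ⊆ U, l(F(J)) ≥ E·l(J) − η·h(J), where l and h denote horizontal and vertical size. -/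
/-!
Move from `p` to `q` through the corner `(q.1, p.2)`. Along the horizontal leg the mean value
theorem gives `|h p - h (q.1, p.2)| ≥ E |p.1 - q.1|`, along the vertical leg
`|h (q.1, p.2) - h q| ≤ η |p.2 - q.2|`; both legs stay in `U` because it is a product of intervals.
Hence `E |p.1 - q.1| ≤ |h p - h q| + η |p.2 - q.2|` for all `p q ∈ J`, and since `h p - h q` is the
difference of first coordinates of `F p` and `F q`, taking suprema gives the claim.
-/

noncomputable def horizontalSize (S : Set (ℝ × ℝ)) : ℝ :=
  sSup {d : ℝ | ∃ p ∈ S, ∃ q ∈ S, d = |p.1 - q.1|}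

noncomputable def verticalSize (S : Set (ℝ × ℝ)) : ℝ :=
  sSup {d : ℝ | ∃ p ∈ S, ∃ q ∈ S, d = |p.2 - q.2|}

open Set Bornology

section Sizes

variable {S : Set (ℝ × ℝ)} {p q : ℝ × ℝ}

lemma abs_fst_sub_le_horizontalSize (hS : IsBounded S) (hp : p ∈ S) (hq : q ∈ S) :
    |p.1 - q.1| ≤ horizontalSize S := by
  refine le_csSup ⟨Metric.diam S, ?_⟩ ⟨p, hp, q, hq, rfl⟩
  rintro _ ⟨p', hp', q', hq', rfl⟩
  exact (le_max_left _ _).trans (Metric.dist_le_diam_of_mem hS hp' hq')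

lemma abs_snd_sub_le_verticalSize (hS : IsBounded S) (hp : p ∈ S) (hq : q ∈ S) :
    |p.2 - q.2| ≤ verticalSize S := by
  refine le_csSup ⟨Metric.diam S, ?_⟩ ⟨p, hp, q, hq, rfl⟩
  rintro _ ⟨p', hp', q', hq', rfl⟩
  exact (le_max_right _ _).trans (Metric.dist_le_diam_of_mem hS hp' hq')

lemma horizontalSize_nonneg (S : Set (ℝ × ℝ)) : 0 ≤ horizontalSize S :=
  Real.sSup_nonneg <| by rintro _ ⟨p, -, q, -, rfl⟩; exact abs_nonneg _

lemma verticalSize_nonneg (S : Set (ℝ × ℝ)) : 0 ≤ verticalSize S :=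
  Real.sSup_nonneg <| by rintro _ ⟨p, -, q, -, rfl⟩; exact abs_nonneg _

lemma mul_horizontalSize_le {E C : ℝ} (hE : 0 ≤ E) (hC : 0 ≤ C)
    (hS : ∀ p ∈ S, ∀ q ∈ S, E * |p.1 - q.1| ≤ C) : E * horizontalSize S ≤ C := by
  rw [horizontalSize, ← smul_eq_mul, ← Real.sSup_smul_of_nonneg hE]
  refine Real.sSup_le ?_ hC
  rintro _ ⟨_, ⟨p, hp, q, hq, rfl⟩, rfl⟩
  exact hS p hp q hq

end Sizes

lemma Convex.mul_abs_sub_le_of_le_abs_hasDerivAt {g g' : ℝ → ℝ} {s : Set ℝ} {E a b : ℝ}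
    (hs : Convex ℝ s) (hg : ∀ t ∈ s, HasDerivAt g (g' t) t) (hE : ∀ t ∈ s, E ≤ |g' t|)
    (ha : a ∈ s) (hb : b ∈ s) : E * |b - a| ≤ |g b - g a| := by
  wlog hab : a < b generalizing a b
  · rcases (not_lt.mp hab).eq_or_lt with rfl | hba
    · simp
    · simpa only [abs_sub_comm] using this hb ha hba
  have hIcc : Icc a b ⊆ s := hs.ordConnected.out ha hb
  obtain ⟨c, hc, hslope⟩ := exists_hasDerivAt_eq_slope g g' hab
    (fun t ht => (hg t (hIcc ht)).continuousAt.continuousWithinAt)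
    (fun t ht => hg t (hIcc (Ioo_subset_Icc_self ht)))
  rw [eq_div_iff (sub_ne_zero.mpr hab.ne')] at hslope
  rw [← hslope, abs_mul]
  exact mul_le_mul_of_nonneg_right (hE c (hIcc (Ioo_subset_Icc_self hc))) (abs_nonneg _)

section Partials

variable {G : Type*} [NormedAddCommGroup G] [NormedSpace ℝ G] {h : ℝ × ℝ → G} {x y : ℝ}

lemma DifferentiableAt.hasDerivAt_comp_prodMk_left (hd : DifferentiableAt ℝ h (x, y)) :
    HasDerivAt (fun t => h (t, y)) (fderiv ℝ h (x, y) (1, 0)) x :=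
  hd.hasFDerivAt.comp_hasDerivAt x ((hasDerivAt_id x).prodMk (hasDerivAt_const x y))

lemma DifferentiableAt.hasDerivAt_comp_prodMk_right (hd : DifferentiableAt ℝ h (x, y)) :
    HasDerivAt (fun t => h (x, t)) (fderiv ℝ h (x, y) (0, 1)) y :=
  hd.hasFDerivAt.comp_hasDerivAt y ((hasDerivAt_const y x).prodMk (hasDerivAt_id y))

end Partials

lemma mul_abs_fst_sub_le {I₁ I₂ : Set ℝ} (hI₁ : Convex ℝ I₁) (hI₂ : Convex ℝ I₂)
    {h : ℝ × ℝ → ℝ} (hdiff : ∀ p ∈ I₁ ×ˢ I₂, DifferentiableAt ℝ h p) {E η : ℝ}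
    (hdx : ∀ p ∈ I₁ ×ˢ I₂, E ≤ |fderiv ℝ h p (1, 0)|)
    (hdy : ∀ p ∈ I₁ ×ˢ I₂, |fderiv ℝ h p (0, 1)| ≤ η)
    {p q : ℝ × ℝ} (hp : p ∈ I₁ ×ˢ I₂) (hq : q ∈ I₁ ×ˢ I₂) :
    E * |p.1 - q.1| ≤ |h p - h q| + η * |p.2 - q.2| := by
  have horizontal : E * |p.1 - q.1| ≤ |h p - h (q.1, p.2)| :=
    hI₁.mul_abs_sub_le_of_le_abs_hasDerivAt (g := fun t => h (t, p.2))
      (fun t ht => (hdiff (t, p.2) ⟨ht, hp.2⟩).hasDerivAt_comp_prodMk_left)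
      (fun t ht => hdx _ ⟨ht, hp.2⟩) hq.1 hp.1
  have vertical : |h q - h (q.1, p.2)| ≤ η * |q.2 - p.2| := by
    simpa only [Real.norm_eq_abs] using hI₂.norm_image_sub_le_of_norm_hasDerivWithin_le
      (f := fun t => h (q.1, t))
      (fun t ht => (hdiff (q.1, t) ⟨hq.1, ht⟩).hasDerivAt_comp_prodMk_right.hasDerivWithinAt)
      (fun t ht => hdy _ ⟨hq.1, ht⟩) hp.2 hq.2
  calc E * |p.1 - q.1| ≤ |h p - h (q.1, p.2)| := horizontal
    _ ≤ |h p - h q| + |h q - h (q.1, p.2)| := abs_sub_le _ _ _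
    _ ≤ |h p - h q| + η * |p.2 - q.2| := by rw [abs_sub_comm p.2]; gcongr

theorem henon_horizontal_size_expansion_general
    (I₁ I₂ : Set ℝ) (hI₁ : Convex ℝ I₁) (hI₂ : Convex ℝ I₂)
    (U : Set (ℝ × ℝ)) (hUdef : U = I₁ ×ˢ I₂)
    (h : ℝ × ℝ → ℝ)
    (V : Set (ℝ × ℝ)) (hUV : U ⊆ V)
    (hdiff : ∀ p ∈ V, DifferentiableAt ℝ h p)
    (E η : ℝ) (hE : 0 ≤ E) (hη : 0 ≤ η)
    (hdx : ∀ p ∈ U, E ≤ |fderiv ℝ h p (1, 0)|)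
    (hdy : ∀ p ∈ U, |fderiv ℝ h p (0, 1)| ≤ η)
    (F : ℝ × ℝ → ℝ × ℝ) (hF : F = fun p => (h p, p.1))
    (J : Set (ℝ × ℝ)) (hJU : J ⊆ U) (hJc : IsCompact J) :
    E * horizontalSize J - η * verticalSize J ≤ horizontalSize (F '' J) := by
  subst hUdef hF
  have hFJ : IsBounded ((fun p => (h p, p.1)) '' J) :=
    (hJc.image_of_continuousOn (ContinuousOn.prodMk
      (fun p hp => (hdiff p (hUV (hJU hp))).continuousAt.continuousWithinAt)
      continuousOn_fst)).isBounded
  have hpair : ∀ p ∈ J, ∀ q ∈ J,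
      E * |p.1 - q.1| ≤ horizontalSize ((fun p => (h p, p.1)) '' J) + η * verticalSize J :=
    fun p hp q hq => (mul_abs_fst_sub_le hI₁ hI₂ (fun p hp => hdiff p (hUV hp)) hdx hdy
      (hJU hp) (hJU hq)).trans <| add_le_add
        (abs_fst_sub_le_horizontalSize hFJ (mem_image_of_mem _ hp) (mem_image_of_mem _ hq))
        (mul_le_mul_of_nonneg_left (abs_snd_sub_le_verticalSize hJc.isBounded hp hq) hη)
  have := mul_horizontalSize_le hE (add_nonneg (horizontalSize_nonneg _)
    (mul_nonneg hη (verticalSize_nonneg J))) hpair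
  linarith

/-- expansion estimate: for a Hénon-like map
`F(x,y) = (h(x,y), x)` with `|∂h/∂x| ≥ E` and `|∂h/∂y| ≤ η` on a product of
intervals `U`, every nonempty compact `J ⊆ U` satisfies
`l(F(J)) ≥ E·l(J) − η·h(J)`. -/
theorem henon_horizontal_size_expansion
    (I₁ I₂ : Set ℝ) (hI₁ : Convex ℝ I₁) (hI₂ : Convex ℝ I₂)
    (U : Set (ℝ × ℝ)) (hUdef : U = I₁ ×ˢ I₂)
    (h : ℝ × ℝ → ℝ)
    (V : Set (ℝ × ℝ)) (hV : IsOpen V) (hUV : U ⊆ V)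
    (hdiff : ∀ p ∈ V, DifferentiableAt ℝ h p)
    (E η : ℝ) (hE : 0 ≤ E) (hη : 0 ≤ η)
    (hdx : ∀ p ∈ U, E ≤ |fderiv ℝ h p (1, 0)|)
    (hdy : ∀ p ∈ U, |fderiv ℝ h p (0, 1)| ≤ η)
    (F : ℝ × ℝ → ℝ × ℝ) (hF : F = fun p => (h p, p.1))
    (J : Set (ℝ × ℝ)) (hJU : J ⊆ U) (hJc : IsCompact J) (hJne : J.Nonempty) :
    E * horizontalSize J - η * verticalSize J ≤ horizontalSize (F '' J) :=
  henon_horizontal_size_expansion_general I₁ I₂ hI₁ hI₂ U hUdef h V hUV hdiff E η hE hη hdx hdy F hF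
    J hJU hJc
end

section
/- Let ε, ε′ ∈ (0,1), c > 0, E > 1, α > 0, l₀ > 0, l₀′ > 0 be reals and let m, m′ be reals. Assume: (i) E^{m′−1}·l₀′ ≤ 2c·√(ε′); (ii) ln l₀′ ≥ 2m·ln ε + ln l₀; (iii) ln ε′ ≤ ε^{−2α}·ln ε; and (iv) (1/4)·ε^{−2α} + (ln E + ln(2c))/(2·ln ε) ≥ ε^{−α}. Then m ≥ (ln E/(−2·ln ε))·m′ + ε^{−α} + (ln l₀)/(−2·ln ε). -/
/-!
Take logarithms in (i) and chain it with (ii), with (iii) halved, and with (iv) multiplied by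
`2 log ε < 0`: this yields `2 m log ε + log l₀ ≤ 2 ε^{-α} log ε - m' log E`, and dividing by
`-2 log ε > 0` gives the bound.
-/

open Real

theorem add_log_le_of_rpow_mul_le_mul_sqrt {E l c ε' t : ℝ} (hE : 0 < E) (hl : 0 < l)
    (h : E ^ t * l ≤ c * √ε') :
    t * log E + log l ≤ log c + log ε' / 2 := by
  have hEt : 0 < E ^ t := rpow_pos_of_pos hE t
  have hrhs : 0 < c * √ε' := (mul_pos hEt hl).trans_le h
  have hc : c ≠ 0 := left_ne_zero_of_mul hrhs.ne'
  have hsqrt : √ε' ≠ 0 := right_ne_zero_of_mul hrhs.ne'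
  have hε' : 0 < ε' := sqrt_ne_zero'.mp hsqrt
  have := log_le_log (mul_pos hEt hl) h
  rwa [log_mul hEt.ne' hl.ne', log_mul hc hsqrt, log_sqrt hε'.le, log_rpow hE] at this

theorem two_row_lemma_arith_general
    (ε ε' c E α l₀ l₀' m m' : ℝ)
    (hε : ε ∈ Set.Ioo (0 : ℝ) 1)
    (hE : 1 < E) (hl₀' : 0 < l₀')
    (h1 : E ^ (m' - 1) * l₀' ≤ 2 * c * Real.sqrt ε')
    (h2 : Real.log l₀' ≥ 2 * m * Real.log ε + Real.log l₀)
    (h3 : Real.log ε' ≤ ε ^ (-(2 * α)) * Real.log ε)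
    (h4 : (1 / 4) * ε ^ (-(2 * α))
        + (Real.log E + Real.log (2 * c)) / (2 * Real.log ε) ≥ ε ^ (-α)) :
    m ≥ (Real.log E / (-2 * Real.log ε)) * m' + ε ^ (-α)
        + Real.log l₀ / (-2 * Real.log ε) := by
  have hL : log ε < 0 := log_neg hε.1 hε.2
  have h1' := add_log_le_of_rpow_mul_le_mul_sqrt (zero_lt_one.trans hE) hl₀' h1
  have h4' : 1 / 2 * ε ^ (-(2 * α)) * log ε + (log E + log (2 * c)) ≤ 2 * log ε * ε ^ (-α) := by
    have := mul_le_mul_of_nonpos_right h4 (by linarith : 2 * log ε ≤ 0)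
    rw [add_mul, div_mul_cancel₀ _ (by linarith)] at this
    linarith
  have key : 2 * m * log ε + log l₀ ≤ 2 * log ε * ε ^ (-α) - m' * log E := by linarith
  have h2L : 0 < -2 * log ε := by linarith
  rw [ge_iff_le, div_mul_eq_mul_div, add_right_comm, ← add_div,
    div_add' _ _ _ h2L.ne', div_le_iff₀ h2L]
  linarith

/-- arithmetic content of the Two Row Lemma: the time span `m`
in the good regions of row `j` is bounded below in terms of the time span `m'`
of row `j+1`, the perturbation sizes `ε, ε'` and the initial side `l₀`. -/
theorem two_row_lemma_arith
    (ε ε' c E α l₀ l₀' m m' : ℝ)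
    (hε : ε ∈ Set.Ioo (0 : ℝ) 1) (hε' : ε' ∈ Set.Ioo (0 : ℝ) 1)
    (hc : 0 < c) (hE : 1 < E) (hα : 0 < α) (hl₀ : 0 < l₀) (hl₀' : 0 < l₀')
    (h1 : E ^ (m' - 1) * l₀' ≤ 2 * c * Real.sqrt ε')
    (h2 : Real.log l₀' ≥ 2 * m * Real.log ε + Real.log l₀)
    (h3 : Real.log ε' ≤ ε ^ (-(2 * α)) * Real.log ε)
    (h4 : (1 / 4) * ε ^ (-(2 * α))
        + (Real.log E + Real.log (2 * c)) / (2 * Real.log ε) ≥ ε ^ (-α)) :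
    m ≥ (Real.log E / (-2 * Real.log ε)) * m' + ε ^ (-α)
        + Real.log l₀ / (-2 * Real.log ε) :=
  two_row_lemma_arith_general ε ε' c E α l₀ l₀' m m' hε hE hl₀' h1 h2 h3 h4
end

section
/- Let N ∈ ℕ, let E > 1 and α > 0 be reals, and let ε, m, L : ℕ → ℝ be sequences such that for all j ≤ N: 0 < ε_j < 1 and m_j ≥ 0; and for all j < N: (i) m_j ≥ (ln E/(−2·ln ε_j))·m_{j+1} + ε_j^{−α} + L_j/(−2·ln ε_j); (ii) L_{j+1} ≥ 2·m_j·ln ε_j + L_j; (iii) ln ε_{j+1} ≤ ε_j^{−2α}·ln ε_j; (iv) ε_j ≤ (ln E)/8; (v) α·ε_j^{−2α} − 2 ≥ α; and (vi) ln E ≤ −2·ln ε_{j+1}. Then for all natural numbers j and k with j + k < N, m_j ≥ 2^{k}·ε_j^{−α} + L_j/(−2·ln ε_j). -/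
/-!
Write `x = ε_j`, `y = ε_{j+1}` and `D = -2 ln x`. Conditions (iii)–(v) give `y^{-α} ≥ x^{-α-2}`,
and `ln E / D ≥ 4 x²` because `-ln x ≤ 1/x`, so the coefficient `ln E / D` in the Two Row Lemma
multiplies the next row's bound `2^k y^{-α}` into at least `4 · 2^k x^{-α}`. The correction term
`L_{j+1} / D_{j+1}` is harmless when `L_{j+1} ≥ 0`; otherwise (vi) and (ii) bound it below by
`L_j / D - m_j`, which costs a factor two. Either way the exponent of `2` increases by one per row.
-/

open Real

lemma neg_two_mul_log_pos {x : ℝ} (hx0 : 0 < x) (hx1 : x < 1) : 0 < -2 * log x := by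
  linarith [log_neg hx0 hx1]

lemma rpow_neg_le_rpow_neg_of_mul_log_le {x y a b : ℝ} (hx : 0 < x) (hy : 0 < y)
    (h : a * log y ≤ b * log x) : x ^ (-b) ≤ y ^ (-a) := by
  rw [rpow_def_of_pos hx, rpow_def_of_pos hy, exp_le_exp]
  linarith

lemma four_mul_sq_le_div_neg_two_mul_log {x c : ℝ} (hx0 : 0 < x) (hx1 : x < 1)
    (hc : x ≤ c / 8) : 4 * x ^ 2 ≤ c / (-2 * log x) := by
  have hlog : -log x ≤ x⁻¹ := by linarith [one_sub_inv_le_log_of_pos hx0]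
  have hinv : x * x⁻¹ = 1 := mul_inv_cancel₀ hx0.ne'
  rw [le_div_iff₀ (neg_two_mul_log_pos hx0 hx1)]
  nlinarith [mul_le_mul_of_nonneg_left hlog (sq_nonneg x)]

lemma four_mul_rpow_neg_le_div_mul_rpow_neg {x y α c : ℝ} (hx0 : 0 < x) (hx1 : x < 1)
    (hy : 0 < y) (hα : 0 < α) (hlog : log y ≤ x ^ (-(2 * α)) * log x) (hc : x ≤ c / 8)
    (hexp : α * x ^ (-(2 * α)) - 2 ≥ α) :
    4 * x ^ (-α) ≤ c / (-2 * log x) * y ^ (-α) := by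
  have hlogx : log x < 0 := log_neg hx0 hx1
  have hmul : α * log y ≤ (α + 2) * log x :=
    calc α * log y ≤ α * (x ^ (-(2 * α)) * log x) := mul_le_mul_of_nonneg_left hlog hα.le
      _ ≤ (α + 2) * log x := by nlinarith
  have hdecay : x ^ (-α) / x ^ 2 ≤ y ^ (-α) := by
    rw [← rpow_two, ← rpow_sub hx0, sub_eq_add_neg, ← neg_add]
    exact rpow_neg_le_rpow_neg_of_mul_log_le hx0 hy hmul
  have hcoef := four_mul_sq_le_div_neg_two_mul_log hx0 hx1 hc
  calc 4 * x ^ (-α) = 4 * x ^ 2 * (x ^ (-α) / x ^ 2) := by field_simp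
    _ ≤ c / (-2 * log x) * (x ^ (-α) / x ^ 2) := by gcongr
    _ ≤ c / (-2 * log x) * y ^ (-α) := by gcongr; linarith [sq_nonneg x]

lemma two_row_step {c D D' u u' m m' L L' r : ℝ} (hD : 0 < D) (hD' : 0 < D') (hc : 0 ≤ c)
    (hcD' : c ≤ D') (hu : 0 ≤ u) (hr : 0 ≤ r) (hgrowth : 4 * u ≤ c / D * u')
    (hrow : c / D * m' + u + L / D ≤ m) (hthick : L - D * m ≤ L')
    (hnext : r * u' + L' / D' ≤ m') :
    2 * r * u + L / D ≤ m := by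
  have hcD : 0 ≤ c / D := by positivity
  have hnext' : c / D * (r * u') + c / D * (L' / D') ≤ c / D * m' := by
    rw [← mul_add]; gcongr
  have hgrowth' : 4 * r * u ≤ c / D * (r * u') := by
    linarith [mul_le_mul_of_nonneg_left hgrowth hr]
  have hru : 0 ≤ r * u := mul_nonneg hr hu
  rcases le_or_gt 0 L' with hL' | hL'
  · have : 0 ≤ c / D * (L' / D') := by positivity
    linarith
  · have hcorr : L' / D ≤ c / D * (L' / D') :=
      calc L' / D = L' / D * 1 := (mul_one _).symm
        _ ≤ L' / D * (c / D') :=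
          mul_le_mul_of_nonpos_left (div_le_one_of_le₀ hcD' hD'.le) (div_neg_of_neg_of_pos hL' hD).le
        _ = c / D * (L' / D') := by ring
    have hthick' : L / D - m ≤ L' / D := by
      have : (L - D * m) / D ≤ L' / D := by gcongr
      rwa [sub_div, mul_div_cancel_left₀ _ hD.ne'] at this
    linarith

/-- inductive lower bound on the time spans in the good regions:
iterating the Two Row Lemma gives `m_j ≥ 2^k · ε_j^{-α} + L_j / (-2 ln ε_j)`
for all `j + k < N`. -/
theorem good_region_time_span_lower_bound
    (N : ℕ) (E α : ℝ) (hE : 1 < E) (hα : 0 < α)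
    (ε m L : ℕ → ℝ)
    (hpos : ∀ j ≤ N, 0 < ε j ∧ ε j < 1 ∧ 0 ≤ m j)
    (h1 : ∀ j < N, m j ≥ (Real.log E / (-2 * Real.log (ε j))) * m (j + 1)
        + ε j ^ (-α) + L j / (-2 * Real.log (ε j)))
    (h2 : ∀ j < N, L (j + 1) ≥ 2 * m j * Real.log (ε j) + L j)
    (h3 : ∀ j < N, Real.log (ε (j + 1)) ≤ ε j ^ (-(2 * α)) * Real.log (ε j))
    (h4 : ∀ j < N, ε j ≤ Real.log E / 8)
    (h5 : ∀ j < N, α * ε j ^ (-(2 * α)) - 2 ≥ α)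
    (h6 : ∀ j < N, Real.log E ≤ -2 * Real.log (ε (j + 1))) :
    ∀ j k : ℕ, j + k < N →
      m j ≥ (2 : ℝ) ^ k * ε j ^ (-α) + L j / (-2 * Real.log (ε j)) := by
  have hlogE : 0 < log E := log_pos hE
  intro j k
  induction k generalizing j with
  | zero =>
    intro hj
    obtain ⟨hx0, hx1, -⟩ := hpos j hj.le
    have hD := neg_two_mul_log_pos hx0 hx1
    have := mul_nonneg (div_pos hlogE hD).le (hpos (j + 1) hj).2.2
    rw [pow_zero, one_mul]
    linarith [h1 j hj]
  | succ k ih =>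
    intro hjk
    have hj : j < N := by omega
    obtain ⟨hx0, hx1, -⟩ := hpos j hj.le
    obtain ⟨hy0, hy1, -⟩ := hpos (j + 1) hj
    rw [pow_succ']
    exact two_row_step (neg_two_mul_log_pos hx0 hx1) (neg_two_mul_log_pos hy0 hy1) hlogE.le (h6 j hj)
      (rpow_nonneg hx0.le _) (by positivity)
      (four_mul_rpow_neg_le_div_mul_rpow_neg hx0 hx1 hy0 hα (h3 j hj) (h4 j hj) (h5 j hj))
      (h1 j hj) (by linarith [h2 j hj]) (ih (j + 1) (by omega))
end
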